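/- Let an S₁×⋯×S_N-setting correlation scenario have finite outcome sets Λ_n and admit at least one normalized real-valued measure on Λ₁^{S₁}×⋯×Λ_N^{S_N} returning all of its joint distributions as marginals. Then γ_E = sup{|(1/B(Ψ))·Σ_{s₁,…,s_N} Σ_{(λ₁,…,λ_N)} ψ_{(s₁,…,s_N)}(λ₁,…,λ_N)·P_{(s₁,…,s_N)}(λ₁,…,λ_N)| : Ψ a family of real-valued functions on Λ₁×⋯×Λ_N with B(Ψ) ≠ 0}, where γ_E is the infimum of the total variation norms ‖μ‖_var over all such normalized measures μ. -/

import Mathlib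

/-!
Weak duality: if `μ` has marginals `P`, then `∑ ψ · P = ∑_ω μ ω · F_ψ ω`, where
`F_ψ ω = ∑_s ψ_s (ω restricted to the settings s)` is the LHV value of the configuration `ω`,
which lies in `[-B(Ψ), B(Ψ)]`; hence `|∑ ψ · P| ≤ ‖μ‖_var · B(Ψ)`.

Strong duality: if `g < γ_E`, then `P` lies outside the image of the `ℓ¹`-ball of radius `g` under
the (linear) marginal map, a compact convex set, since measures with marginals `P` are
automatically normalized. A separating functional is a Bell expression `ψ`, and evaluating it on
`±g` times the point mass at a configuration where `|F_ψ| = B(Ψ)` gives `g · B(Ψ) < ∑ ψ · P`.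
-/
open scoped ComplexOrder Matrix
open MeasureTheory ProbabilityTheory

namespace LqHV

/-- Entrywise tensor (Kronecker) product of a finite family of square complex matrices,
realized on the pi-type index. -/
def tprod {ι : Type} [Fintype ι] [DecidableEq ι] {κ : ι → Type} [∀ i, Fintype (κ i)]
    (X : ∀ i, Matrix (κ i) (κ i) ℂ) : Matrix (∀ i, κ i) (∀ i, κ i) ℂ :=
  fun a b => ∏ i, X i (a i) (b i)

/-- Elementary (product) vector of a family of vectors. -/
def tvec {ι : Type} [Fintype ι] [DecidableEq ι] {κ : ι → Type} (ψ : ∀ i, κ i → ℂ) : (∀ i, κ i) → ℂ :=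
  fun a => ∏ i, ψ i (a i)

/-- Tensor positivity of a matrix on a tensor product space. -/
def TensorPos {ι : Type} [Fintype ι] [DecidableEq ι] {κ : ι → Type} [∀ i, Fintype (κ i)]
    (Z : Matrix (∀ i, κ i) (∀ i, κ i) ℂ) : Prop :=
  ∀ ψ : ∀ i, κ i → ℂ, 0 ≤ star (tvec ψ) ⬝ᵥ Z.mulVec (tvec ψ)

/-- `C` is a covering of `Z`. -/
def IsCovering {ι : Type} [Fintype ι] [DecidableEq ι] {κ : ι → Type} [∀ i, Fintype (κ i)]
    (Z C : Matrix (∀ i, κ i) (∀ i, κ i) ℂ) : Prop :=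
  TensorPos C ∧ TensorPos (C + Z) ∧ TensorPos (C - Z)

/-- The covering norm. -/
noncomputable def covNorm {ι : Type} [Fintype ι] [DecidableEq ι] {κ : ι → Type} [∀ i, Fintype (κ i)]
    (Z : Matrix (∀ i, κ i) (∀ i, κ i) ℂ) : ℝ :=
  sInf ((fun C => (Matrix.trace C).re) '' {C | IsCovering Z C})

/-- The absolute value `√(Wᴴ W)` of a matrix. -/
noncomputable def matAbs {n : Type} [Fintype n] [DecidableEq n]
    (W : Matrix n n ℂ) : Matrix n n ℂ :=
  ((Matrix.posSemidef_conjTranspose_mul_self W).1.eigenvectorUnitary : Matrix n n ℂ) *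
    Matrix.diagonal (fun i => ((Real.sqrt
      ((Matrix.posSemidef_conjTranspose_mul_self W).1.eigenvalues i) : ℝ) : ℂ)) *
    (star (Matrix.posSemidef_conjTranspose_mul_self W).1.eigenvectorUnitary : Matrix n n ℂ)

/-- The trace norm `tr √(Wᴴ W)`. -/
noncomputable def traceNorm {n : Type} [Fintype n] [DecidableEq n]
    (W : Matrix n n ℂ) : ℝ :=
  ((matAbs W).trace).re

variable {N : ℕ}

/-- In the tensor product space `⊗_n (ℂ^{d n})^{⊗ S n}`, the operator that acts as `X n` in
slot `k n` of site `n` and as the identity elsewhere. -/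
def slot {d S : Fin N → ℕ} (X : ∀ n, Matrix (Fin (d n)) (Fin (d n)) ℂ) (k : ∀ n, Fin (S n)) :
    ∀ p : Σ n : Fin N, Fin (S n), Matrix (Fin (d p.1)) (Fin (d p.1)) ℂ :=
  fun p => if p.2 = k p.1 then X p.1 else 1

/-- `T` is an `S₁ × ⋯ × S_N`-setting source operator for the state `ρ`. -/
def IsSourceOp (d S : Fin N → ℕ) (ρ : Matrix (∀ n, Fin (d n)) (∀ n, Fin (d n)) ℂ)
    (T : Matrix (∀ p : Σ n : Fin N, Fin (S n), Fin (d p.1))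
          (∀ p : Σ n : Fin N, Fin (S n), Fin (d p.1)) ℂ) : Prop :=
  T.IsHermitian ∧
    ∀ (X : ∀ n, Matrix (Fin (d n)) (Fin (d n)) ℂ) (k : ∀ n, Fin (S n)),
      (T * tprod (slot X k)).trace = (ρ * tprod X).trace

/-- A POVM with finite outcome set. -/
def IsPOVM {d : ℕ} {Λ : Type} [Fintype Λ] (M : Λ → Matrix (Fin d) (Fin d) ℂ) : Prop :=
  (∀ l, (M l).PosSemidef) ∧ ∑ l, M l = 1

/-- Joint probability distributions of a quantum correlation scenario. -/
noncomputable def quantumP {d S : Fin N → ℕ} {Λ : Fin N → Type} [∀ n, Fintype (Λ n)]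
    (ρ : Matrix (∀ n, Fin (d n)) (∀ n, Fin (d n)) ℂ)
    (M : ∀ n, Fin (S n) → Λ n → Matrix (Fin (d n)) (Fin (d n)) ℂ)
    (s : ∀ n, Fin (S n)) (lam : ∀ n, Λ n) : ℝ :=
  ((ρ * tprod (fun n => M n (s n) (lam n))).trace).re

/-- A real-valued (signed) measure on the finite set `∏_n Λ_n^{S n}` is normalized. -/
def Normalized {S : Fin N → ℕ} {Λ : Fin N → Type} [∀ n, Fintype (Λ n)] [∀ n, DecidableEq (Λ n)]
    (μ : (∀ n, Fin (S n) → Λ n) → ℝ) : Prop :=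
  ∑ ω, μ ω = 1

/-- `μ` returns all joint distributions `P` of the scenario as the corresponding marginals. -/
def ReturnsMarginals {S : Fin N → ℕ} {Λ : Fin N → Type} [∀ n, Fintype (Λ n)]
    [∀ n, DecidableEq (Λ n)]
    (μ : (∀ n, Fin (S n) → Λ n) → ℝ) (P : (∀ n, Fin (S n)) → (∀ n, Λ n) → ℝ) : Prop :=
  ∀ (s : ∀ n, Fin (S n)) (lam : ∀ n, Λ n),
    (∑ ω : ∀ n, Fin (S n) → Λ n, if (fun n => ω n (s n)) = lam then μ ω else 0) = P s lam

/-- The total variation norm of a real-valued measure on a finite set. -/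
noncomputable def varNorm {S : Fin N → ℕ} {Λ : Fin N → Type} [∀ n, Fintype (Λ n)]
    [∀ n, DecidableEq (Λ n)] (μ : (∀ n, Fin (S n) → Λ n) → ℝ) : ℝ :=
  ∑ ω, |μ ω|

/-- The parameter `γ_E`: the infimum of the total variation norms over all normalized
real-valued measures returning all joint distributions of the scenario as marginals. -/
noncomputable def gammaE {S : Fin N → ℕ} {Λ : Fin N → Type} [∀ n, Fintype (Λ n)]
    [∀ n, DecidableEq (Λ n)] (P : (∀ n, Fin (S n)) → (∀ n, Λ n) → ℝ) : ℝ :=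
  sInf {t | ∃ μ, Normalized μ ∧ ReturnsMarginals μ P ∧ t = varNorm μ}

/-- Integration of a bounded function with respect to a signed measure, via the Jordan
decomposition. -/
noncomputable def signedIntegral {Ω : Type} [MeasurableSpace Ω] (ν : SignedMeasure Ω)
    (f : Ω → ℝ) : ℝ :=
  (∫ ω, f ω ∂ν.toJordanDecomposition.posPart) - ∫ ω, f ω ∂ν.toJordanDecomposition.negPart

/-- An `S₁ × ⋯ × S_N`-setting correlation scenario with finite outcome sets admits an LHV
(local hidden variable) model. -/
def AdmitsLHVFin {S : Fin N → ℕ} {Λ : Fin N → Type} [∀ n, Fintype (Λ n)]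
    (P : (∀ n, Fin (S n)) → (∀ n, Λ n) → ℝ) : Prop :=
  ∃ (Ω : Type) (_ : MeasurableSpace Ω) (ν : Measure Ω) (_ : IsProbabilityMeasure ν)
    (p : ∀ n, Fin (S n) → Ω → Λ n → ℝ),
    (∀ n s ω l, 0 ≤ p n s ω l) ∧ (∀ n s ω, ∑ l, p n s ω l = 1) ∧
    (∀ n s l, Measurable fun ω => p n s ω l) ∧
    ∀ (s : ∀ n, Fin (S n)) (lam : ∀ n, Λ n),
      P s lam = ∫ ω, ∏ n, p n (s n) ω (lam n) ∂ν

/-- An `S₁ × ⋯ × S_N`-setting correlation scenario with finite outcome sets admits an LqHV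
(local quasi hidden variable) model. -/
def AdmitsLqHVFin {S : Fin N → ℕ} {Λ : Fin N → Type} [∀ n, Fintype (Λ n)]
    (P : (∀ n, Fin (S n)) → (∀ n, Λ n) → ℝ) : Prop :=
  ∃ (Ω : Type) (_ : MeasurableSpace Ω) (ν : SignedMeasure Ω)
    (p : ∀ n, Fin (S n) → Ω → Λ n → ℝ),
    ν Set.univ = 1 ∧
    (∀ n s ω l, 0 ≤ p n s ω l) ∧ (∀ n s ω, ∑ l, p n s ω l = 1) ∧
    (∀ n s l, Measurable fun ω => p n s ω l) ∧
    ∀ (s : ∀ n, Fin (S n)) (lam : ∀ n, Λ n),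
      P s lam = signedIntegral ν fun ω => ∏ n, p n (s n) ω (lam n)

end LqHV

namespace LqHV

variable {N : ℕ}

/-- The LHV constant `B_sup(Ψ)`: the supremum over all configurations
`(λ_n^{(s_n)}) ∈ ∏_n Λ_n^{S_n}` of `∑_{s₁,…,s_N} ψ_{(s₁,…,s_N)}(λ₁^{(s₁)},…,λ_N^{(s_N)})`. -/
noncomputable def bellSup {S : Fin N → ℕ} {Λ : Fin N → Type} [∀ n, Fintype (Λ n)]
    (ψ : (∀ n, Fin (S n)) → (∀ n, Λ n) → ℝ) : ℝ :=
  sSup (Set.range fun lam : ∀ n, Fin (S n) → Λ n =>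
    ∑ s : ∀ n, Fin (S n), ψ s fun n => lam n (s n))

/-- The LHV constant `B_inf(Ψ)`. -/
noncomputable def bellInf {S : Fin N → ℕ} {Λ : Fin N → Type} [∀ n, Fintype (Λ n)]
    (ψ : (∀ n, Fin (S n)) → (∀ n, Λ n) → ℝ) : ℝ :=
  sInf (Set.range fun lam : ∀ n, Fin (S n) → Λ n =>
    ∑ s : ∀ n, Fin (S n), ψ s fun n => lam n (s n))

/-- The LHV constant `B(Ψ) = max{|B_sup(Ψ)|, |B_inf(Ψ)|}`. -/
noncomputable def bellB {S : Fin N → ℕ} {Λ : Fin N → Type} [∀ n, Fintype (Λ n)]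
    (ψ : (∀ n, Fin (S n)) → (∀ n, Λ n) → ℝ) : ℝ :=
  max |bellSup ψ| |bellInf ψ|

end LqHV

theorem LinearMap.apply_eq_sum_sum_single {R ι κ : Type*} [CommSemiring R] [Fintype ι]
    [DecidableEq ι] [Fintype κ] [DecidableEq κ] (φ : (ι → κ → R) →ₗ[R] R) (y : ι → κ → R) :
    φ y = ∑ i, ∑ k, φ (Pi.single i (Pi.single k 1)) * y i k := by
  conv_lhs => rw [← Finset.univ_sum_single y, map_sum]
  refine Finset.sum_congr rfl fun i _ => ?_
  rw [← LinearMap.single_apply (R := R), ← LinearMap.comp_apply, LinearMap.pi_apply_eq_sum_univ]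
  simp only [smul_eq_mul, mul_comm, LinearMap.comp_apply, LinearMap.single_apply]
  simp only [← Pi.single_apply, Pi.single_comm]

section SumAbsLe

variable {ι : Type*} [Fintype ι]

theorem setOf_sum_abs_le_eq_image (r : ℝ) :
    {x : ι → ℝ | ∑ i, |x i| ≤ r} =
      WithLp.ofLp '' Metric.closedBall (0 : PiLp 1 fun _ : ι => ℝ) r := by
  ext x
  refine ⟨fun hx => ⟨WithLp.toLp 1 x, by simpa [PiLp.norm_eq_of_L1] using hx, rfl⟩, ?_⟩
  rintro ⟨y, hy, rfl⟩
  simpa [PiLp.norm_eq_of_L1] using hy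

theorem isCompact_setOf_sum_abs_le (r : ℝ) : IsCompact {x : ι → ℝ | ∑ i, |x i| ≤ r} := by
  rw [setOf_sum_abs_le_eq_image]
  exact (isCompact_closedBall _ _).image (PiLp.continuous_ofLp _ _)

theorem convex_setOf_sum_abs_le (r : ℝ) : Convex ℝ {x : ι → ℝ | ∑ i, |x i| ≤ r} := by
  rw [setOf_sum_abs_le_eq_image]
  exact (convex_closedBall _ _).linear_image (WithLp.linearEquiv 1 ℝ (ι → ℝ)).toLinearMap

end SumAbsLe

namespace LqHV

variable {N : ℕ} {S : Fin N → ℕ} {Λ : Fin N → Type} [∀ n, Fintype (Λ n)]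

section LHVValue

def lhvValue (ψ : (∀ n, Fin (S n)) → (∀ n, Λ n) → ℝ) (ω : ∀ n, Fin (S n) → Λ n) : ℝ :=
  ∑ s, ψ s fun n => ω n (s n)

variable (ψ : (∀ n, Fin (S n)) → (∀ n, Λ n) → ℝ)

theorem bellB_nonneg : 0 ≤ bellB ψ :=
  (abs_nonneg _).trans (le_max_left _ _)

theorem abs_lhvValue_le_bellB (ω : ∀ n, Fin (S n) → Λ n) : |lhvValue ψ ω| ≤ bellB ψ := by
  have hsup : lhvValue ψ ω ≤ bellSup ψ := le_csSup (Set.finite_range _).bddAbove ⟨ω, rfl⟩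
  have hinf : bellInf ψ ≤ lhvValue ψ ω := csInf_le (Set.finite_range _).bddBelow ⟨ω, rfl⟩
  have hsup_le : |bellSup ψ| ≤ bellB ψ := le_max_left _ _
  have hinf_le : |bellInf ψ| ≤ bellB ψ := le_max_right _ _
  rw [abs_le]
  constructor <;> linarith [neg_abs_le (bellInf ψ), le_abs_self (bellSup ψ)]

theorem exists_abs_lhvValue_eq_bellB [Nonempty (∀ n, Fin (S n) → Λ n)] :
    ∃ ω, |lhvValue ψ ω| = bellB ψ := by
  obtain ⟨ω₁, hω₁⟩ := (Set.range_nonempty (lhvValue ψ)).csSup_mem (Set.finite_range _)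
  obtain ⟨ω₂, hω₂⟩ := (Set.range_nonempty (lhvValue ψ)).csInf_mem (Set.finite_range _)
  rcases le_total |bellSup ψ| |bellInf ψ| with h | h
  · exact ⟨ω₂, by rw [hω₂, bellB, max_eq_right h]; rfl⟩
  · exact ⟨ω₁, by rw [hω₁, bellB, max_eq_left h]; rfl⟩

end LHVValue

variable [∀ n, DecidableEq (Λ n)]

def marginals :
    ((∀ n, Fin (S n) → Λ n) → ℝ) →ₗ[ℝ] ((∀ n, Fin (S n)) → (∀ n, Λ n) → ℝ) where
  toFun μ s lam := ∑ ω, if (fun n => ω n (s n)) = lam then μ ω else 0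
  map_add' μ ν := by ext; simp [← Finset.sum_add_distrib, ite_add_ite]
  map_smul' c μ := by ext; simp [Finset.mul_sum]

@[simp]
theorem marginals_apply (μ : (∀ n, Fin (S n) → Λ n) → ℝ) (s : ∀ n, Fin (S n))
    (lam : ∀ n, Λ n) :
    marginals μ s lam = ∑ ω, if (fun n => ω n (s n)) = lam then μ ω else 0 :=
  rfl

theorem returnsMarginals_iff {μ : (∀ n, Fin (S n) → Λ n) → ℝ}
    {P : (∀ n, Fin (S n)) → (∀ n, Λ n) → ℝ} : ReturnsMarginals μ P ↔ marginals μ = P :=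
  ⟨fun h => funext₂ h, fun h s lam => congrFun₂ h s lam⟩

theorem sum_marginals (μ : (∀ n, Fin (S n) → Λ n) → ℝ) (s : ∀ n, Fin (S n)) :
    ∑ lam, marginals μ s lam = ∑ ω, μ ω := by
  simp only [marginals_apply]
  rw [Finset.sum_comm]
  simp

theorem sum_mul_marginals (ψ : (∀ n, Fin (S n)) → (∀ n, Λ n) → ℝ)
    (μ : (∀ n, Fin (S n) → Λ n) → ℝ) :
    ∑ s, ∑ lam, ψ s lam * marginals μ s lam = ∑ ω, μ ω * lhvValue ψ ω := by
  have h s : ∑ lam, ψ s lam * marginals μ s lam = ∑ ω, μ ω * ψ s fun n => ω n (s n) := by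
    simp only [marginals_apply, Finset.mul_sum, mul_ite, mul_zero]
    rw [Finset.sum_comm]
    simp [mul_comm]
  simp only [h, lhvValue, Finset.mul_sum]
  exact Finset.sum_comm

theorem varNorm_nonneg (μ : (∀ n, Fin (S n) → Λ n) → ℝ) : 0 ≤ varNorm μ :=
  Finset.sum_nonneg fun _ _ => abs_nonneg _

theorem gammaE_le_varNorm {μ : (∀ n, Fin (S n) → Λ n) → ℝ}
    {P : (∀ n, Fin (S n)) → (∀ n, Λ n) → ℝ} (hμ : Normalized μ) (hμP : ReturnsMarginals μ P) :
    gammaE P ≤ varNorm μ :=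
  csInf_le ⟨0, by rintro _ ⟨ν, -, -, rfl⟩; exact varNorm_nonneg ν⟩ ⟨μ, hμ, hμP, rfl⟩

theorem Normalized.of_returnsMarginals [Nonempty (∀ n, Fin (S n))]
    {μ ν : (∀ n, Fin (S n) → Λ n) → ℝ} {P : (∀ n, Fin (S n)) → (∀ n, Λ n) → ℝ}
    (hν : Normalized ν) (hνP : ReturnsMarginals ν P) (hμP : ReturnsMarginals μ P) :
    Normalized μ := by
  obtain ⟨s⟩ := ‹Nonempty (∀ n, Fin (S n))›
  rw [returnsMarginals_iff] at hνP hμP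
  rw [Normalized, ← sum_marginals μ s, hμP, ← hνP, sum_marginals]
  exact hν

theorem abs_sum_mul_le_varNorm_mul_bellB {μ : (∀ n, Fin (S n) → Λ n) → ℝ}
    {P : (∀ n, Fin (S n)) → (∀ n, Λ n) → ℝ} (hμP : ReturnsMarginals μ P)
    (ψ : (∀ n, Fin (S n)) → (∀ n, Λ n) → ℝ) :
    |∑ s, ∑ lam, ψ s lam * P s lam| ≤ varNorm μ * bellB ψ := by
  obtain rfl := returnsMarginals_iff.1 hμP
  rw [sum_mul_marginals, varNorm, Finset.sum_mul]
  refine (Finset.abs_sum_le_sum_abs _ _).trans (Finset.sum_le_sum fun ω _ => ?_)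
  rw [abs_mul]
  exact mul_le_mul_of_nonneg_left (abs_lhvValue_le_bellB ψ ω) (abs_nonneg _)

theorem abs_div_bellB_le_varNorm {μ : (∀ n, Fin (S n) → Λ n) → ℝ}
    {P : (∀ n, Fin (S n)) → (∀ n, Λ n) → ℝ} (hμP : ReturnsMarginals μ P)
    {ψ : (∀ n, Fin (S n)) → (∀ n, Λ n) → ℝ} (hψ : bellB ψ ≠ 0) :
    |(∑ s, ∑ lam, ψ s lam * P s lam) / bellB ψ| ≤ varNorm μ := by
  have hB : 0 < bellB ψ := (bellB_nonneg ψ).lt_of_ne' hψ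
  rw [abs_div, abs_of_pos hB, div_le_iff₀ hB]
  exact abs_sum_mul_le_varNorm_mul_bellB hμP ψ

theorem exists_mul_bellB_lt_of_forall_lt_varNorm [Nonempty (∀ n, Fin (S n))]
    {μ₀ : (∀ n, Fin (S n) → Λ n) → ℝ} {P : (∀ n, Fin (S n)) → (∀ n, Λ n) → ℝ}
    (hμ₀ : Normalized μ₀) (hμ₀P : ReturnsMarginals μ₀ P) {g : ℝ} (hg₀ : 0 ≤ g)
    (hg : ∀ μ, Normalized μ → ReturnsMarginals μ P → g < varNorm μ) :
    ∃ ψ, g * bellB ψ < ∑ s, ∑ lam, ψ s lam * P s lam := by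
  have hP : P ∉ marginals '' {x | ∑ ω, |x ω| ≤ g} := by
    rintro ⟨μ, hμ, hμP⟩
    have hμP' := returnsMarginals_iff.2 hμP
    exact (hg μ (hμ₀.of_returnsMarginals hμ₀P hμP') hμP').not_ge hμ
  obtain ⟨φ, u, hφ, hu⟩ := geometric_hahn_banach_closed_point
    ((convex_setOf_sum_abs_le g).linear_image marginals)
    ((isCompact_setOf_sum_abs_le g).image marginals.continuous_of_finiteDimensional).isClosed hP
  set ψ := fun s lam => φ (Pi.single s (Pi.single lam 1))
  have hφψ (y : (∀ n, Fin (S n)) → (∀ n, Λ n) → ℝ) : φ y = ∑ s, ∑ lam, ψ s lam * y s lam :=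
    φ.toLinearMap.apply_eq_sum_sum_single y
  obtain ⟨ω₀, -⟩ := Finset.nonempty_of_sum_ne_zero (hμ₀.trans_ne one_ne_zero)
  have : Nonempty (∀ n, Fin (S n) → Λ n) := ⟨ω₀⟩
  obtain ⟨ω, hω⟩ := exists_abs_lhvValue_eq_bellB ψ
  set x : (∀ n, Fin (S n) → Λ n) → ℝ := Pi.single ω (g * SignType.sign (lhvValue ψ ω))
  have hx : ∑ ω', |x ω'| ≤ g := by
    have hsign : |(SignType.sign (lhvValue ψ ω) : ℝ)| ≤ 1 := by
      cases SignType.sign (lhvValue ψ ω) <;> simp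
    simpa [x, Pi.single_apply, apply_ite abs, abs_mul, abs_of_nonneg hg₀] using
      mul_le_of_le_one_right hg₀ hsign
  have hφx : φ (marginals x) = g * bellB ψ := by
    rw [hφψ, sum_mul_marginals]
    simp [x, Pi.single_apply, mul_assoc, mul_comm _ (lhvValue ψ ω), self_mul_sign, hω]
  exact ⟨ψ, hφx ▸ (hφ _ ⟨x, hx, rfl⟩).trans (hφψ P ▸ hu)⟩

theorem exists_lt_abs_bell_ratio_of_forall_lt_varNorm [Nonempty (∀ n, Fin (S n))]
    {μ₀ : (∀ n, Fin (S n) → Λ n) → ℝ} {P : (∀ n, Fin (S n)) → (∀ n, Λ n) → ℝ}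
    (hμ₀ : Normalized μ₀) (hμ₀P : ReturnsMarginals μ₀ P) {g : ℝ} (hg₀ : 0 ≤ g)
    (hg : ∀ μ, Normalized μ → ReturnsMarginals μ P → g < varNorm μ) :
    ∃ ψ, bellB ψ ≠ 0 ∧ g < |(∑ s, ∑ lam, ψ s lam * P s lam) / bellB ψ| := by
  obtain ⟨ψ, hψ⟩ := exists_mul_bellB_lt_of_forall_lt_varNorm hμ₀ hμ₀P hg₀ hg
  have hB : 0 < bellB ψ := by
    refine (bellB_nonneg ψ).lt_of_ne' fun h₀ => ?_
    have hbound := abs_sum_mul_le_varNorm_mul_bellB hμ₀P ψ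
    rw [h₀, mul_zero] at hbound hψ
    linarith [le_abs_self (∑ s, ∑ lam, ψ s lam * P s lam)]
  exact ⟨ψ, hB.ne', ((lt_div_iff₀ hB).2 hψ).trans_le (le_abs_self _)⟩

end LqHV

open LqHV in
theorem gammaE_eq_sup_bell_ratio_general {N : ℕ} (S : Fin N → ℕ) (hS : ∀ n, 1 ≤ S n)
    {Λ : Fin N → Type} [∀ n, Fintype (Λ n)] [∀ n, DecidableEq (Λ n)]
    (P : (∀ n, Fin (S n)) → (∀ n, Λ n) → ℝ)
    (hex : ∃ μ, Normalized μ ∧ ReturnsMarginals μ P) :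
    gammaE P = sSup {x : ℝ | ∃ ψ : (∀ n, Fin (S n)) → (∀ n, Λ n) → ℝ,
      bellB ψ ≠ 0 ∧
      x = |(∑ s : ∀ n, Fin (S n), ∑ lam : ∀ n, Λ n, ψ s lam * P s lam) / bellB ψ|} := by
  obtain ⟨μ₀, hμ₀, hμ₀P⟩ := hex
  have : Nonempty (∀ n, Fin (S n)) := ⟨fun n => ⟨0, hS n⟩⟩
  set R := {x : ℝ | ∃ ψ : (∀ n, Fin (S n)) → (∀ n, Λ n) → ℝ, bellB ψ ≠ 0 ∧
    x = |(∑ s : ∀ n, Fin (S n), ∑ lam : ∀ n, Λ n, ψ s lam * P s lam) / bellB ψ|}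
  have hR_le (μ) (hμP : ReturnsMarginals μ P) : ∀ x ∈ R, x ≤ varNorm μ := by
    rintro _ ⟨ψ, hψ, rfl⟩
    exact abs_div_bellB_le_varNorm hμP hψ
  refine le_antisymm ?_ (le_csInf ⟨_, μ₀, hμ₀, hμ₀P, rfl⟩ ?_)
  · by_contra! hlt
    have hR_nonneg : 0 ≤ sSup R := Real.sSup_nonneg fun x ⟨_, _, hx⟩ => hx ▸ abs_nonneg _
    obtain ⟨ψ, hψ, hgψ⟩ := exists_lt_abs_bell_ratio_of_forall_lt_varNorm hμ₀ hμ₀P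
      (g := (sSup R + gammaE P) / 2) (by linarith) fun μ hμ hμP => by
        linarith [gammaE_le_varNorm hμ hμP]
    have := le_csSup ⟨_, hR_le μ₀ hμ₀P⟩ ⟨ψ, hψ, rfl⟩
    linarith
  · rintro _ ⟨μ, -, hμP, rfl⟩
    exact Real.sSup_le (hR_le μ hμP) (varNorm_nonneg μ)

open LqHV in
/-- **Lemma 3.** For an `S₁ × ⋯ × S_N`-setting correlation scenario with finite outcome sets
admitting at least one normalized real-valued measure returning all its joint distributions
as marginals, the parameter `γ_E` equals the supremum of the normalized absolute Bell
expressions `|Σ_s ⟨ψ_s⟩ / B(Ψ)|` over all non-trivial families `Ψ`. -/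
theorem gammaE_eq_sup_bell_ratio {N : ℕ} (S : Fin N → ℕ) (hS : ∀ n, 1 ≤ S n)
    {Λ : Fin N → Type} [∀ n, Fintype (Λ n)] [∀ n, DecidableEq (Λ n)]
    (P : (∀ n, Fin (S n)) → (∀ n, Λ n) → ℝ)
    (hP0 : ∀ s lam, 0 ≤ P s lam) (hP1 : ∀ s, ∑ lam, P s lam = 1)
    (hex : ∃ μ, Normalized μ ∧ ReturnsMarginals μ P) :
    gammaE P = sSup {x : ℝ | ∃ ψ : (∀ n, Fin (S n)) → (∀ n, Λ n) → ℝ,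
      bellB ψ ≠ 0 ∧
      x = |(∑ s : ∀ n, Fin (S n), ∑ lam : ∀ n, Λ n, ψ s lam * P s lam) / bellB ψ|} :=
  gammaE_eq_sup_bell_ratio_general S hS P hex
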